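/- arXiv:1711.05293 — 2 statements merged into one kernel-verified Lean document; each statement's English description precedes it below -/
import Mathlib

section
/- Let Γ be a graph labelled by a set S and let ℓ̄(p) ∈ F(S) denote the image in the free group F(S) of the label of a path p. Then for every closed path p in Γ, the element ℓ̄(p) lies in the normal closure in F(S) of the set { ℓ̄(q) : q a simple closed path of Γ }. -/
/-- A graph: vertex set `V`, edge set `E`, initial/terminal vertex maps, and a
fixed-point-free involution on edges swapping initial and terminal vertices. -/
structure LabGraph (V E : Type*) where
  init : E → V
  term : E → V
  inv : E → E
  inv_inv : ∀ e, inv (inv e) = e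
  inv_ne : ∀ e, inv e ≠ e
  init_inv : ∀ e, init (inv e) = term e
  term_inv : ∀ e, term (inv e) = init e

/-- A path: the terminal vertex of each edge is the initial vertex of the next one. -/
def IsPath {V E : Type*} (G : LabGraph V E) (l : List E) : Prop :=
  l.Chain' (fun e f => G.term e = G.init f)

/-- A reduced path contains no subpath of the form `(e, e⁻¹)`. -/
def IsReducedPath {V E : Type*} (G : LabGraph V E) (l : List E) : Prop :=
  l.Chain' (fun e f => f ≠ G.inv e)

/-- A closed path: its initial vertex equals its terminal vertex (the empty path is closed). -/
def IsClosedPath {V E : Type*} (G : LabGraph V E) (l : List E) : Prop :=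
  l.head?.map G.init = l.getLast?.map G.term

/-- One step of deletion of a subpath of the form `(e, e⁻¹)`. -/
def DelStep {V E : Type*} (G : LabGraph V E) (l l' : List E) : Prop :=
  ∃ (a b : List E) (e : E), l = a ++ e :: G.inv e :: b ∧ l' = a ++ b

/-- A path is trivial if it becomes empty after consecutive deletions of subpaths `(e, e⁻¹)`. -/
def IsTrivialPath {V E : Type*} (G : LabGraph V E) (l : List E) : Prop :=
  Relation.ReflTransGen (DelStep G) l []

/-- A simple closed path: a closed, non-trivial path no proper (nonempty) subpath
of which is closed. -/
def IsSimpleClosed {V E : Type*} (G : LabGraph V E) (l : List E) : Prop :=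
  IsPath G l ∧ IsClosedPath G l ∧ ¬ IsTrivialPath G l ∧
    ∀ a m b : List E, l = a ++ m ++ b → m ≠ [] → a ++ b ≠ [] → ¬ IsClosedPath G m

/-!
Strong induction on the length of a closed path `p`. A trivial path has label `1`. If `p` is
neither trivial nor simple closed, it has a closed subpath: `p = a m b` with `m` closed and
nonempty and `a b` nonempty. Cutting out the loop `m` leaves the closed path `a b`, and
`ℓ̄(p) = ℓ̄(a) ℓ̄(m) ℓ̄(a)⁻¹ · ℓ̄(a b)` expresses `ℓ̄(p)` through the labels of two shorter
closed paths.
-/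

section ClosedPaths

variable {V E S : Type*} {G : LabGraph V E}

theorem isClosedPath_iff_of_ne_nil {l : List E} (hl : l ≠ []) :
    IsClosedPath G l ↔ G.init (l.head hl) = G.term (l.getLast hl) := by
  simp [IsClosedPath, List.head?_eq_some_head hl, List.getLast?_eq_getLast_of_ne_nil hl]

namespace IsPath

theorem of_infix {a m b : List E} (hp : IsPath G (a ++ m ++ b)) : IsPath G m :=
  List.IsChain.infix hp ⟨a, b, rfl⟩

theorem term_eq_init_of_append {a b : List E} (hp : IsPath G (a ++ b)) :
    ∀ x ∈ a.getLast?, ∀ y ∈ b.head?, G.term x = G.init y :=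
  (List.isChain_append.mp hp).2.2

theorem excise {a m b : List E} (hp : IsPath G (a ++ m ++ b)) (hm : m ≠ [])
    (hmcl : IsClosedPath G m) : IsPath G (a ++ b) := by
  have hp' : IsPath G (a ++ (m ++ b)) := by rwa [← List.append_assoc]
  refine List.IsChain.append (List.IsChain.left_of_append hp')
    (List.IsChain.right_of_append hp) fun x hx y hy => ?_
  calc G.term x = G.init (m.head hm) :=
        term_eq_init_of_append (List.IsChain.left_of_append hp) x hx _ (List.head?_eq_some_head hm)
    _ = G.term (m.getLast hm) := (isClosedPath_iff_of_ne_nil hm).mp hmcl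
    _ = G.init y := term_eq_init_of_append (List.IsChain.right_of_append hp') _
        (List.getLast?_eq_getLast_of_ne_nil hm) y hy

end IsPath

theorem head?_map_init_excise {a m b : List E} (hp : IsPath G (a ++ m ++ b)) (hm : m ≠ [])
    (hmcl : IsClosedPath G m) (hab : a ++ b ≠ []) :
    (a ++ m ++ b).head?.map G.init = (a ++ b).head?.map G.init := by
  rcases eq_or_ne a [] with rfl | ha
  · have hb : b ≠ [] := by simpa using hab
    simp only [List.nil_append] at hp ⊢
    simp only [List.head?_append_of_ne_nil _ hm, List.head?_eq_some_head hm,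
      List.head?_eq_some_head hb, Option.map_some, Option.some.injEq]
    calc G.init (m.head hm) = G.term (m.getLast hm) := (isClosedPath_iff_of_ne_nil hm).mp hmcl
      _ = G.init (b.head hb) := hp.term_eq_init_of_append _
        (List.getLast?_eq_getLast_of_ne_nil hm) _ (List.head?_eq_some_head hb)
  · simp [List.append_assoc, List.head?_append_of_ne_nil _ ha]

theorem getLast?_map_term_excise {a m b : List E} (hp : IsPath G (a ++ m ++ b)) (hm : m ≠ [])
    (hmcl : IsClosedPath G m) (hab : a ++ b ≠ []) :
    (a ++ m ++ b).getLast?.map G.term = (a ++ b).getLast?.map G.term := by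
  rcases eq_or_ne b [] with rfl | hb
  · have ha : a ≠ [] := by simpa using hab
    simp only [List.append_nil] at hp ⊢
    simp only [List.getLast?_append_of_ne_nil _ hm, List.getLast?_eq_getLast_of_ne_nil hm,
      List.getLast?_eq_getLast_of_ne_nil ha, Option.map_some, Option.some.injEq]
    calc G.term (m.getLast hm) = G.init (m.head hm) :=
          ((isClosedPath_iff_of_ne_nil hm).mp hmcl).symm
      _ = G.term (a.getLast ha) := (hp.term_eq_init_of_append _
        (List.getLast?_eq_getLast_of_ne_nil ha) _ (List.head?_eq_some_head hm)).symm
  · rw [List.getLast?_append_of_ne_nil _ hb, List.getLast?_append_of_ne_nil _ hb]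

theorem IsClosedPath.excise {a m b : List E} (hp : IsPath G (a ++ m ++ b))
    (hcl : IsClosedPath G (a ++ m ++ b)) (hm : m ≠ []) (hmcl : IsClosedPath G m) :
    IsClosedPath G (a ++ b) := by
  rcases eq_or_ne (a ++ b) [] with hab | hab
  · rw [hab]; rfl
  · rw [IsClosedPath, ← head?_map_init_excise hp hm hmcl hab,
      ← getLast?_map_term_excise hp hm hmcl hab]
    exact hcl

theorem FreeGroup.mk_append_append_eq_conj_mul (a m b : List (S × Bool)) :
    FreeGroup.mk (a ++ m ++ b) = FreeGroup.mk a * FreeGroup.mk m * (FreeGroup.mk a)⁻¹ *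
      FreeGroup.mk (a ++ b) := by
  simp only [← FreeGroup.mul_mk]
  group

variable {ℓ : E → S × Bool}

theorem DelStep.mk_map_eq (hinv : ∀ e, ℓ (G.inv e) = ((ℓ e).1, !(ℓ e).2))
    {l l' : List E} (h : DelStep G l l') :
    FreeGroup.mk (l.map ℓ) = FreeGroup.mk (l'.map ℓ) := by
  obtain ⟨a, b, e, rfl, rfl⟩ := h
  simp only [List.map_append, List.map_cons, hinv e]
  exact Quot.sound FreeGroup.Red.Step.not

theorem IsTrivialPath.mk_map_eq_one (hinv : ∀ e, ℓ (G.inv e) = ((ℓ e).1, !(ℓ e).2))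
    {l : List E} (h : IsTrivialPath G l) : FreeGroup.mk (l.map ℓ) = 1 :=
  h.head_induction_on rfl fun hstep _ ih => (hstep.mk_map_eq hinv).trans ih

end ClosedPaths

/-- The alphabet `S ⊔ S⁻¹` is modelled as `S × Bool`, and the label of a path `(e₁, …, eₙ)` is
`FreeGroup.mk [ℓ e₁, …, ℓ eₙ]`. -/
theorem closed_path_label_mem_normalClosure {V E S : Type*} (G : LabGraph V E)
    (ℓ : E → S × Bool)
    (hinv : ∀ e, ℓ (G.inv e) = ((ℓ e).1, !(ℓ e).2))
    (p : List E) (hp : IsPath G p) (hcl : IsClosedPath G p) :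
    FreeGroup.mk (p.map ℓ) ∈ Subgroup.normalClosure
      {x : FreeGroup S | ∃ q : List E, IsSimpleClosed G q ∧ x = FreeGroup.mk (q.map ℓ)} := by
  set N := Subgroup.normalClosure
    {x : FreeGroup S | ∃ q : List E, IsSimpleClosed G q ∧ x = FreeGroup.mk (q.map ℓ)}
  induction hn : p.length using Nat.strong_induction_on generalizing p with
  | _ n ih =>
  subst hn
  by_cases htriv : IsTrivialPath G p
  · rw [htriv.mk_map_eq_one hinv]
    exact N.one_mem
  by_cases hloop : ∃ a m b, p = a ++ m ++ b ∧ m ≠ [] ∧ a ++ b ≠ [] ∧ IsClosedPath G m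
  · obtain ⟨a, m, b, rfl, hm, hab, hmcl⟩ := hloop
    have hm_pos : 0 < m.length := List.length_pos_iff.mpr hm
    have hab_pos : 0 < a.length + b.length := by simpa using List.length_pos_iff.mpr hab
    have hm_lt : m.length < (a ++ m ++ b).length := by simp only [List.length_append]; omega
    have hab_lt : (a ++ b).length < (a ++ m ++ b).length := by
      simp only [List.length_append]; omega
    rw [List.map_append, List.map_append, FreeGroup.mk_append_append_eq_conj_mul,
      ← List.map_append]
    have hmN := ih _ hm_lt m hp.of_infix hmcl rfl
    have habN := ih _ hab_lt _ (hp.excise hm hmcl) (hcl.excise hp hm hmcl) rfl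
    exact N.mul_mem (Subgroup.normalClosure_normal.conj_mem _ hmN _) habN
  simp only [not_exists, not_and] at hloop
  exact Subgroup.subset_normalClosure ⟨p, ⟨hp, hcl, htriv, hloop⟩, rfl⟩
end

section
/- Let Γ be a graph labelled by a set S, let R_c = { ℓ̄(p) : p a closed path of Γ } ⊆ F(S) and R_s = { ℓ̄(q) : q a simple closed path of Γ } ⊆ F(S). Then the normal closure of R_c in the free group F(S) equals the normal closure of R_s in F(S); consequently the presentations ⟨S ∣ R_c⟩ and ⟨S ∣ R_s⟩ define the same group (the quotients F(S)/⟪R_c⟫ and F(S)/⟪R_s⟫ coincide). -/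
/-!
Induction on the length of a closed path `p`. If `p` is trivial, every deletion of `(e, e⁻¹)` is
a free reduction of its label, so `ℓ̄(p) = 1`. If `p = a m b` with `m` a nonempty closed subpath
and `a b` nonempty, then `a b` is again a closed path (the endpoints of `m` coincide), and
`ℓ̄(p) = ℓ̄(a) ℓ̄(m) ℓ̄(a)⁻¹ · ℓ̄(a b)` with both `m` and `a b` shorter than `p`. In the remaining
case `p` is simple closed by definition.
-/

namespace LabGraph

variable {V E : Type*} (G : LabGraph V E)

def IsWalk : V → V → List E → Prop
  | u, v, [] => u = v
  | u, v, e :: l => G.init e = u ∧ IsWalk (G.term e) v l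

variable {G}

@[simp] lemma isWalk_nil {u v : V} : G.IsWalk u v [] ↔ u = v := Iff.rfl

@[simp] lemma isWalk_cons {u v : V} {e : E} {l : List E} :
    G.IsWalk u v (e :: l) ↔ G.init e = u ∧ G.IsWalk (G.term e) v l := Iff.rfl

lemma isWalk_append {u v : V} {l₁ l₂ : List E} :
    G.IsWalk u v (l₁ ++ l₂) ↔ ∃ w, G.IsWalk u w l₁ ∧ G.IsWalk w v l₂ := by
  induction l₁ generalizing u with
  | nil => simp
  | cons e l ih => simp [ih, and_assoc]

lemma isPath_singleton (e : E) : IsPath G [e] := List.isChain_singleton e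

lemma isPath_cons_cons {e f : E} {l : List E} :
    IsPath G (e :: f :: l) ↔ G.term e = G.init f ∧ IsPath G (f :: l) :=
  List.isChain_cons_cons

lemma isWalk_iff {u v : V} {l : List E} (hl : l ≠ []) :
    G.IsWalk u v l ↔ IsPath G l ∧ G.init (l.head hl) = u ∧ G.term (l.getLast hl) = v := by
  induction l generalizing u with
  | nil => exact absurd rfl hl
  | cons e l ih =>
    rcases eq_or_ne l [] with rfl | hl'
    · simp [isPath_singleton, eq_comm]
    · obtain ⟨f, l, rfl⟩ := List.exists_cons_of_ne_nil hl'
      simp only [isWalk_cons, ih hl', isPath_cons_cons, List.getLast_cons hl', List.head_cons]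
      grind

lemma isClosedPath_iff {l : List E} (hl : l ≠ []) :
    IsClosedPath G l ↔ G.init (l.head hl) = G.term (l.getLast hl) := by
  simp [IsClosedPath, List.head?_eq_some_head hl, List.getLast?_eq_some_getLast hl]

lemma isPath_and_isClosedPath_iff {l : List E} (hl : l ≠ []) :
    IsPath G l ∧ IsClosedPath G l ↔ ∃ v, G.IsWalk v v l := by
  simp only [isWalk_iff hl, isClosedPath_iff hl]
  exact ⟨fun ⟨hp, hc⟩ => ⟨_, hp, rfl, hc.symm⟩, fun ⟨_, hp, hi, ht⟩ => ⟨hp, hi.trans ht.symm⟩⟩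

lemma IsWalk.remove_closed {v : V} {a m b : List E} (h : G.IsWalk v v (a ++ m ++ b))
    (hm : m ≠ []) (hmc : IsClosedPath G m) : G.IsWalk v v (a ++ b) := by
  obtain ⟨w₂, ham, hb⟩ := isWalk_append.1 h
  obtain ⟨w₁, ha, hwm⟩ := isWalk_append.1 ham
  obtain ⟨-, hinit, hterm⟩ := (isWalk_iff hm).1 hwm
  rw [isClosedPath_iff hm, hinit, hterm] at hmc
  exact isWalk_append.2 ⟨w₁, ha, hmc ▸ hb⟩

lemma isPath_and_isClosedPath_remove_closed {a m b : List E} (hp : IsPath G (a ++ m ++ b))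
    (hc : IsClosedPath G (a ++ m ++ b)) (hm : m ≠ []) (hmc : IsClosedPath G m) :
    IsPath G (a ++ b) ∧ IsClosedPath G (a ++ b) := by
  rcases eq_or_ne (a ++ b) [] with hab | hab
  · rw [hab]
    exact ⟨List.isChain_nil, rfl⟩
  obtain ⟨v, hv⟩ := (isPath_and_isClosedPath_iff (by simp [hm])).1 ⟨hp, hc⟩
  exact (isPath_and_isClosedPath_iff hab).2 ⟨v, hv.remove_closed hm hmc⟩

variable {S : Type*} {ℓ : E → S × Bool}

lemma mk_map_eq_of_delStep (hℓ : ∀ e, ℓ (G.inv e) = ((ℓ e).1, !(ℓ e).2)) {l l' : List E}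
    (h : DelStep G l l') : FreeGroup.mk (l.map ℓ) = FreeGroup.mk (l'.map ℓ) := by
  obtain ⟨a, b, e, rfl, rfl⟩ := h
  simp only [List.map_append, List.map_cons, hℓ]
  exact Quot.sound FreeGroup.Red.Step.not

lemma mk_map_eq_one_of_isTrivialPath (hℓ : ∀ e, ℓ (G.inv e) = ((ℓ e).1, !(ℓ e).2))
    {l : List E} (h : IsTrivialPath G l) : FreeGroup.mk (l.map ℓ) = 1 := by
  induction h using Relation.ReflTransGen.head_induction_on with
  | refl => rfl
  | head hstep _ ih => rw [mk_map_eq_of_delStep hℓ hstep, ih]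

variable (G ℓ) in
def closedPathLabels : Set (FreeGroup S) :=
  {x | ∃ p : List E, IsPath G p ∧ IsClosedPath G p ∧ x = FreeGroup.mk (p.map ℓ)}

variable (G ℓ) in
def simpleClosedPathLabels : Set (FreeGroup S) :=
  {x | ∃ q : List E, IsSimpleClosed G q ∧ x = FreeGroup.mk (q.map ℓ)}

lemma mk_map_append_append (a m b : List E) :
    FreeGroup.mk ((a ++ m ++ b).map ℓ) =
      FreeGroup.mk (a.map ℓ) * FreeGroup.mk (m.map ℓ) * (FreeGroup.mk (a.map ℓ))⁻¹ *
        FreeGroup.mk ((a ++ b).map ℓ) := by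
  simp only [List.map_append, ← FreeGroup.mul_mk]
  group

lemma mk_map_mem_normalClosure_simpleClosedPathLabels
    (hℓ : ∀ e, ℓ (G.inv e) = ((ℓ e).1, !(ℓ e).2)) {p : List E} (hp : IsPath G p)
    (hc : IsClosedPath G p) :
    FreeGroup.mk (p.map ℓ) ∈ Subgroup.normalClosure (simpleClosedPathLabels G ℓ) := by
  by_cases htriv : IsTrivialPath G p
  · rw [mk_map_eq_one_of_isTrivialPath hℓ htriv]
    exact one_mem _
  by_cases hsplit : ∃ a m b, p = a ++ m ++ b ∧ m ≠ [] ∧ a ++ b ≠ [] ∧ IsClosedPath G m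
  · obtain ⟨a, m, b, hpq, hm, hab, hmc⟩ := hsplit
    rw [hpq] at hp hc ⊢
    obtain ⟨hp', hc'⟩ := isPath_and_isClosedPath_remove_closed hp hc hm hmc
    have hmp : IsPath G m := List.IsChain.infix hp ⟨a, b, rfl⟩
    rw [mk_map_append_append]
    exact mul_mem (Subgroup.normalClosure_normal.conj_mem _
      (mk_map_mem_normalClosure_simpleClosedPathLabels hℓ hmp hmc) _)
      (mk_map_mem_normalClosure_simpleClosedPathLabels hℓ hp' hc')
  · exact Subgroup.subset_normalClosure
      ⟨p, ⟨hp, hc, htriv, fun a m b h hm hab hmc => hsplit ⟨a, m, b, h, hm, hab, hmc⟩⟩, rfl⟩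
termination_by p.length
decreasing_by
  all_goals
    have := List.length_pos_of_ne_nil hm
    have := List.length_pos_of_ne_nil hab
    simp only [hpq, List.length_append] at *
    omega

variable (G ℓ) in
lemma normalClosure_closedPathLabels (hℓ : ∀ e, ℓ (G.inv e) = ((ℓ e).1, !(ℓ e).2)) :
    Subgroup.normalClosure (closedPathLabels G ℓ) =
      Subgroup.normalClosure (simpleClosedPathLabels G ℓ) := by
  refine le_antisymm (Subgroup.normalClosure_le_normal ?_) (Subgroup.normalClosure_mono ?_)
  · rintro _ ⟨p, hp, hc, rfl⟩
    exact mk_map_mem_normalClosure_simpleClosedPathLabels hℓ hp hc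
  · rintro _ ⟨q, ⟨hp, hc, -⟩, rfl⟩
    exact ⟨q, hp, hc, rfl⟩

end LabGraph

/-- The normal closure in `F(S)` of the set `R_c` of labels of all closed paths of `Γ`
equals the normal closure of the set `R_s` of labels of all simple closed paths;
consequently the quotients `F(S)/⟪R_c⟫` and `F(S)/⟪R_s⟫` coincide. -/
theorem normalClosure_closed_eq_normalClosure_simpleClosed
    {V E S : Type*} (G : LabGraph V E) (ℓ : E → S × Bool)
    (hinv : ∀ e, ℓ (G.inv e) = ((ℓ e).1, !(ℓ e).2)) :
    Subgroup.normalClosure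
        {x : FreeGroup S | ∃ p : List E, IsPath G p ∧ IsClosedPath G p ∧
          x = FreeGroup.mk (p.map ℓ)} =
      Subgroup.normalClosure
        {x : FreeGroup S | ∃ q : List E, IsSimpleClosed G q ∧ x = FreeGroup.mk (q.map ℓ)} ∧
    (FreeGroup S ⧸ Subgroup.normalClosure
        {x : FreeGroup S | ∃ p : List E, IsPath G p ∧ IsClosedPath G p ∧
          x = FreeGroup.mk (p.map ℓ)}) =
      (FreeGroup S ⧸ Subgroup.normalClosure
        {x : FreeGroup S | ∃ q : List E, IsSimpleClosed G q ∧ x = FreeGroup.mk (q.map ℓ)}) := by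
  have h := LabGraph.normalClosure_closedPathLabels G ℓ hinv
  exact ⟨h, congrArg (FreeGroup S ⧸ ·) h⟩
end
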